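/- Let X be a Banach space with X** = ℓ∞ ⊕ Z (as in the situation where X contains c₀ with weak*-closure ℓ∞ in X**), and let U be a free ultrafilter on ℕ. For x = (y, z) ∈ X ⊆ ℓ∞ ⊕ Z, define |x| := max{ |lim_U y|, supₙ |y(n) − lim_U y|, ‖z‖ }. Then |·| is an equivalent norm on X, and the canonical c₀-basis (eₙ) ⊆ X is isometrically equivalent to the c₀-basis under |·|. -/

import Mathlib

open NormedSpace

/-- The new norm `|x| = max {|lim_U y|, supₙ |y n − lim_U y|, ‖z‖}` where
`(y, z) ∈ ℓ∞ ⊕ Z` is the decomposition of (the canonical image in `X**` of) `x`. -/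
noncomputable def newNorm {X : Type*} [NormedAddCommGroup X] [NormedSpace ℝ X]
    {Z : Type*} [NormedAddCommGroup Z] [NormedSpace ℝ Z]
    (T : StrongDual ℝ (StrongDual ℝ X) ≃L[ℝ] (lp (fun _ : ℕ => ℝ) ⊤ × Z))
    (U : Ultrafilter ℕ) (x : X) : ℝ :=
  let y : ℕ → ℝ := fun n => (T (inclusionInDoubleDual ℝ X x)).1 n
  let l : ℝ := Filter.limUnder (U : Filter ℕ) y
  let z : Z := (T (inclusionInDoubleDual ℝ X x)).2
  max |l| (max (⨆ n, |y n - l|) ‖z‖)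

open Filter Topology

set_option synthInstance.maxHeartbeats 800000
set_option maxHeartbeats 1600000

section Aux

variable {X : Type*} [NormedAddCommGroup X] [NormedSpace ℝ X]
    {Z : Type*} [NormedAddCommGroup Z] [NormedSpace ℝ Z]
    (T : StrongDual ℝ (StrongDual ℝ X) ≃L[ℝ] (lp (fun _ : ℕ => ℝ) ⊤ × Z))

/-- `n`-th coordinate of the `ℓ∞` part, as a linear map. -/
noncomputable def yCoord (n : ℕ) : X →ₗ[ℝ] ℝ where
  toFun x := (T (inclusionInDoubleDual ℝ X x)).1 n
  map_add' x₁ x₂ := by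
    have h : T (inclusionInDoubleDual ℝ X (x₁ + x₂))
        = T (inclusionInDoubleDual ℝ X x₁) + T (inclusionInDoubleDual ℝ X x₂) := by
      rw [map_add, map_add]
    dsimp only
    rw [h, Prod.fst_add, lp.coeFn_add, Pi.add_apply]
  map_smul' a x := by
    have h : T (inclusionInDoubleDual ℝ X (a • x))
        = a • T (inclusionInDoubleDual ℝ X x) := by rw [map_smul, map_smul]
    dsimp only
    rw [h, Prod.smul_fst, lp.coeFn_smul, Pi.smul_apply, RingHom.id_apply, smul_eq_mul]

/-- the `Z` part, as a linear map. -/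
noncomputable def zPart : X →ₗ[ℝ] Z where
  toFun x := (T (inclusionInDoubleDual ℝ X x)).2
  map_add' x₁ x₂ := by
    have h : T (inclusionInDoubleDual ℝ X (x₁ + x₂))
        = T (inclusionInDoubleDual ℝ X x₁) + T (inclusionInDoubleDual ℝ X x₂) := by
      rw [map_add, map_add]
    rw [h, Prod.snd_add]
  map_smul' a x := by
    have h : T (inclusionInDoubleDual ℝ X (a • x))
        = a • T (inclusionInDoubleDual ℝ X x) := by rw [map_smul, map_smul]
    rw [h, Prod.smul_snd, RingHom.id_apply]

lemma yCoord_abs_le (x : X) (n : ℕ) :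
    |yCoord T n x| ≤ ‖(T (inclusionInDoubleDual ℝ X x)).1‖ := by
  have := lp.norm_apply_le_norm (E := fun _ : ℕ => ℝ) ENNReal.top_ne_zero
    (T (inclusionInDoubleDual ℝ X x)).1 n
  simpa [Real.norm_eq_abs, yCoord] using this

lemma exists_lim (U : Ultrafilter ℕ) (v : ℕ → ℝ) (M : ℝ) (hv : ∀ n, |v n| ≤ M) :
    ∃ a : ℝ, |a| ≤ M ∧ Filter.Tendsto v (U : Filter ℕ) (𝓝 a) := by
  have hc : IsCompact (Set.Icc (-M) M) := isCompact_Icc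
  have hle : ↑(U.map v) ≤ Filter.principal (Set.Icc (-M) M) := by
    rw [Ultrafilter.coe_map, Filter.le_principal_iff, Filter.mem_map]
    filter_upwards [Filter.univ_mem] with n _
    exact abs_le.mp (hv n)
  obtain ⟨a, ha, hconv⟩ := hc.ultrafilter_le_nhds (U.map v) hle
  exact ⟨a, abs_le.mpr ⟨ha.1, ha.2⟩, hconv⟩

lemma bdd_range (x : X) (l : ℝ) :
    BddAbove (Set.range fun n => |yCoord T n x - l|) := by
  refine ⟨‖(T (inclusionInDoubleDual ℝ X x)).1‖ + |l|, ?_⟩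
  rintro r ⟨n, rfl⟩
  calc |yCoord T n x - l| ≤ |yCoord T n x| + |l| := abs_sub (yCoord T n x) l
    _ ≤ ‖(T (inclusionInDoubleDual ℝ X x)).1‖ + |l| :=
        add_le_add_left (yCoord_abs_le T x n) _

lemma newNorm_eq (U : Ultrafilter ℕ) (x : X) :
    newNorm T U x =
      max |limUnder (U : Filter ℕ) (fun n => yCoord T n x)|
        (max (⨆ n, |yCoord T n x - limUnder (U : Filter ℕ) (fun n => yCoord T n x)|)
          ‖zPart T x‖) := rfl

lemma newNorm_nonneg (U : Ultrafilter ℕ) (x : X) : 0 ≤ newNorm T U x :=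
  le_trans (abs_nonneg _) (le_max_left _ _)

end Aux

theorem stmt14 {X : Type*} [NormedAddCommGroup X] [NormedSpace ℝ X] [CompleteSpace X]
    {Z : Type*} [NormedAddCommGroup Z] [NormedSpace ℝ Z] [CompleteSpace Z]
    (T : StrongDual ℝ (StrongDual ℝ X) ≃L[ℝ] (lp (fun _ : ℕ => ℝ) ⊤ × Z))
    (U : Ultrafilter ℕ) (hU : ∀ n : ℕ, ({n}ᶜ : Set ℕ) ∈ U)
    (e : ℕ → X)
    -- `(eₙ)` is isometrically equivalent to the `c₀`-basis in the original norm
    (he : ∀ (B : Finset ℕ) (hB : B.Nonempty) (c : ℕ → ℝ),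
      ‖∑ i ∈ B, c i • e i‖ = B.sup' hB fun i => |c i|)
    -- the canonical image of `eₙ` in `X** = ℓ∞ ⊕ Z` is the `n`-th unit vector of `ℓ∞`
    (heT : ∀ n : ℕ, (T (inclusionInDoubleDual ℝ X (e n))).2 = 0 ∧
      ∀ m : ℕ, (T (inclusionInDoubleDual ℝ X (e n))).1 m = if m = n then (1 : ℝ) else 0) :
    -- `newNorm` is a norm on `X` ...
    ((∀ x : X, newNorm T U x = 0 ↔ x = 0) ∧
      (∀ (a : ℝ) (x : X), newNorm T U (a • x) = |a| * newNorm T U x) ∧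
      (∀ x₁ x₂ : X, newNorm T U (x₁ + x₂) ≤ newNorm T U x₁ + newNorm T U x₂)) ∧
    -- ... equivalent to the original norm ...
    (∃ c > (0 : ℝ), ∃ C > (0 : ℝ), ∀ x : X,
      c * ‖x‖ ≤ newNorm T U x ∧ newNorm T U x ≤ C * ‖x‖) ∧
    -- ... and `(eₙ)` is isometrically equivalent to the `c₀`-basis under `newNorm`
    (∀ (B : Finset ℕ) (hB : B.Nonempty) (c : ℕ → ℝ),
      newNorm T U (∑ i ∈ B, c i • e i) = B.sup' hB fun i => |c i|) := by
  classical
  -- the limit along `U` exists for each `x`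
  have hlimex : ∀ x : X, Filter.Tendsto (fun n => yCoord T n x) (U : Filter ℕ)
      (𝓝 (limUnder (U : Filter ℕ) (fun n => yCoord T n x))) ∧
      |limUnder (U : Filter ℕ) (fun n => yCoord T n x)|
        ≤ ‖(T (inclusionInDoubleDual ℝ X x)).1‖ := by
    intro x
    obtain ⟨a, haM, hta⟩ := exists_lim U (fun n => yCoord T n x)
      ‖(T (inclusionInDoubleDual ℝ X x)).1‖ (fun n => yCoord_abs_le T x n)
    have h := hta.limUnder_eq
    rw [h]
    exact ⟨hta, haM⟩
  have hlim : ∀ x : X, Filter.Tendsto (fun n => yCoord T n x) (U : Filter ℕ)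
      (𝓝 (limUnder (U : Filter ℕ) (fun n => yCoord T n x))) := fun x => (hlimex x).1
  -- components are dominated by the new norm
  have hlle : ∀ x : X, |limUnder (U : Filter ℕ) (fun n => yCoord T n x)| ≤ newNorm T U x :=
    fun x => by rw [newNorm_eq]; exact le_max_left _ _
  have hSle : ∀ x : X,
      (⨆ n, |yCoord T n x - limUnder (U : Filter ℕ) (fun n => yCoord T n x)|)
        ≤ newNorm T U x :=
    fun x => by rw [newNorm_eq]; exact le_trans (le_max_left _ _) (le_max_right _ _)
  have hzle : ∀ x : X, ‖zPart T x‖ ≤ newNorm T U x :=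
    fun x => by rw [newNorm_eq]; exact le_trans (le_max_right _ _) (le_max_right _ _)
  have hJnorm : ∀ x : X, ‖inclusionInDoubleDual ℝ X x‖ = ‖x‖ := fun x =>
    (inclusionInDoubleDualLi ℝ (E := X)).norm_map x
  -- homogeneity
  have hom : ∀ (a : ℝ) (x : X), newNorm T U (a • x) = |a| * newNorm T U x := by
    intro a x
    have hls : limUnder (U : Filter ℕ) (fun n => yCoord T n (a • x))
        = a * limUnder (U : Filter ℕ) (fun n => yCoord T n x) := by
      have h1 : (fun n => yCoord T n (a • x)) = fun n => a * yCoord T n x :=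
        funext fun n => by rw [map_smul, smul_eq_mul]
      have h2 := (hlim x).const_mul a
      exact (h1 ▸ h2).limUnder_eq
    rw [newNorm_eq, newNorm_eq, hls]
    have h3 : (⨆ n, |yCoord T n (a • x)
          - a * limUnder (U : Filter ℕ) (fun n => yCoord T n x)|)
        = ⨆ n, |a| * |yCoord T n x - limUnder (U : Filter ℕ) (fun n => yCoord T n x)| := by
      congr 1
      funext n
      rw [map_smul, smul_eq_mul, ← mul_sub, abs_mul]
    rw [h3, ← Real.mul_iSup_of_nonneg (abs_nonneg a), map_smul, norm_smul, Real.norm_eq_abs,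
      abs_mul, ← mul_max_of_nonneg _ _ (abs_nonneg a), ← mul_max_of_nonneg _ _ (abs_nonneg a)]
  -- triangle inequality
  have htri : ∀ x₁ x₂ : X, newNorm T U (x₁ + x₂) ≤ newNorm T U x₁ + newNorm T U x₂ := by
    intro x₁ x₂
    have hladd : limUnder (U : Filter ℕ) (fun n => yCoord T n (x₁ + x₂))
        = limUnder (U : Filter ℕ) (fun n => yCoord T n x₁)
          + limUnder (U : Filter ℕ) (fun n => yCoord T n x₂) := by
      have h1 : (fun n => yCoord T n (x₁ + x₂))
          = fun n => yCoord T n x₁ + yCoord T n x₂ := funext fun n => by rw [map_add]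
      exact (h1 ▸ ((hlim x₁).add (hlim x₂))).limUnder_eq
    rw [newNorm_eq, hladd]
    refine max_le ?_ (max_le ?_ ?_)
    · exact le_trans (abs_add_le _ _) (add_le_add (hlle x₁) (hlle x₂))
    · refine ciSup_le fun n => ?_
      have e1 := le_ciSup (bdd_range T x₁ (limUnder (U : Filter ℕ) fun n => yCoord T n x₁)) n
      have e2 := le_ciSup (bdd_range T x₂ (limUnder (U : Filter ℕ) fun n => yCoord T n x₂)) n
      calc |yCoord T n (x₁ + x₂)
            - (limUnder (U : Filter ℕ) (fun n => yCoord T n x₁)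
              + limUnder (U : Filter ℕ) (fun n => yCoord T n x₂))|
          = |(yCoord T n x₁ - limUnder (U : Filter ℕ) (fun n => yCoord T n x₁))
            + (yCoord T n x₂ - limUnder (U : Filter ℕ) (fun n => yCoord T n x₂))| := by
            rw [map_add]; congr 1; ring
        _ ≤ _ + _ := abs_add_le _ _
        _ ≤ newNorm T U x₁ + newNorm T U x₂ :=
            add_le_add (le_trans e1 (hSle x₁)) (le_trans e2 (hSle x₂))
    · rw [map_add]
      exact le_trans (norm_add_le _ _) (add_le_add (hzle x₁) (hzle x₂))
  refine ⟨⟨?_, hom, htri⟩, ?_, ?_⟩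
  · -- definiteness
    intro x
    constructor
    · intro h
      have hl0 : limUnder (U : Filter ℕ) (fun n => yCoord T n x) = 0 :=
        abs_eq_zero.mp (le_antisymm (h ▸ hlle x) (abs_nonneg _))
      have hy0 : ∀ n, yCoord T n x = 0 := by
        intro n
        have e1 := le_ciSup (bdd_range T x (limUnder (U : Filter ℕ) fun n => yCoord T n x)) n
        have e2 : |yCoord T n x - limUnder (U : Filter ℕ) (fun n => yCoord T n x)| ≤ 0 :=
          le_trans e1 (h ▸ hSle x)
        have h3 := abs_eq_zero.mp (le_antisymm e2 (abs_nonneg _))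
        rw [hl0] at h3
        linarith [h3]
      have hz0 : zPart T x = 0 :=
        norm_eq_zero.mp (le_antisymm (h ▸ hzle x) (norm_nonneg _))
      have hT0 : T (inclusionInDoubleDual ℝ X x) = 0 := by
        have h1 : (T (inclusionInDoubleDual ℝ X x)).1 = 0 := by
          apply lp.ext
          funext n
          simpa [yCoord] using hy0 n
        have h2 : (T (inclusionInDoubleDual ℝ X x)).2 = 0 := hz0
        exact Prod.ext h1 h2
      have hJ0 : inclusionInDoubleDual ℝ X x = 0 := by
        apply T.injective
        rw [hT0, map_zero]
      have hxn : ‖x‖ = 0 := by rw [← hJnorm x, hJ0]; exact norm_zero (E := StrongDual ℝ (StrongDual ℝ X))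
      exact norm_eq_zero.mp hxn
    · rintro rfl
      have h0 : ∀ n, yCoord T n (0 : X) = 0 := fun n => map_zero _
      have hl0 : limUnder (U : Filter ℕ) (fun n => yCoord T n (0 : X)) = 0 := by
        have h1 : (fun n => yCoord T n (0 : X)) = fun _ => (0 : ℝ) := funext h0
        rw [h1]
        exact Filter.Tendsto.limUnder_eq tendsto_const_nhds
      rw [newNorm_eq, hl0]
      have h2 : (⨆ n, |yCoord T n (0 : X) - 0|) = 0 := by
        have h1 : (fun n => |yCoord T n (0 : X) - 0|) = fun _ => (0 : ℝ) :=
          funext fun n => by rw [h0 n, sub_zero, abs_zero]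
        rw [h1, ciSup_const]
      rw [h2, map_zero, norm_zero, abs_zero]
      simp
  · -- equivalence of norms
    letI i1 : NormedAddCommGroup (StrongDual ℝ (StrongDual ℝ X)) := inferInstance
    letI i2 : NormedSpace ℝ (StrongDual ℝ (StrongDual ℝ X)) := inferInstance
    set cT : ℝ := ‖(T.symm : (lp (fun _ : ℕ => ℝ) ⊤ × Z) →L[ℝ] StrongDual ℝ (StrongDual ℝ X))‖ with hcT
    set CT : ℝ := ‖(T : StrongDual ℝ (StrongDual ℝ X) →L[ℝ] (lp (fun _ : ℕ => ℝ) ⊤ × Z))‖ with hCT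
    have hcT0 : 0 ≤ cT := norm_nonneg _
    have hCT0 : 0 ≤ CT := norm_nonneg _
    refine ⟨(2 * (cT + 1))⁻¹, by positivity, 2 * (CT + 1), by positivity, fun x => ?_⟩
    have hNnn : 0 ≤ newNorm T U x := newNorm_nonneg T U x
    constructor
    · -- lower bound
      have hy2 : ∀ n, |yCoord T n x| ≤ 2 * newNorm T U x := by
        intro n
        have e1 := le_ciSup (bdd_range T x (limUnder (U : Filter ℕ) fun n => yCoord T n x)) n
        calc |yCoord T n x|
            ≤ |yCoord T n x - limUnder (U : Filter ℕ) (fun n => yCoord T n x)|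
              + |limUnder (U : Filter ℕ) (fun n => yCoord T n x)| := by
              have h4 := abs_add_le (yCoord T n x - limUnder (U : Filter ℕ) fun n => yCoord T n x)
                (limUnder (U : Filter ℕ) fun n => yCoord T n x)
              simpa using h4
          _ ≤ newNorm T U x + newNorm T U x := add_le_add (le_trans e1 (hSle x)) (hlle x)
          _ = 2 * newNorm T U x := by ring
      have hfst : ‖(T (inclusionInDoubleDual ℝ X x)).1‖ ≤ 2 * newNorm T U x := by
        rw [lp.norm_eq_ciSup]
        refine ciSup_le fun n => ?_
        have h5 : ‖((T (inclusionInDoubleDual ℝ X x)).1 : ℕ → ℝ) n‖ = |yCoord T n x| :=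
          Real.norm_eq_abs _
        rw [h5]
        exact hy2 n
      have hsnd : ‖(T (inclusionInDoubleDual ℝ X x)).2‖ ≤ 2 * newNorm T U x :=
        le_trans (hzle x) (by linarith)
      have ht : ‖T (inclusionInDoubleDual ℝ X x)‖ ≤ 2 * newNorm T U x := by
        rw [Prod.norm_def]
        exact max_le hfst hsnd
      have hx : ‖x‖ ≤ cT * (2 * newNorm T U x) := by
        have h1 : ‖x‖ = ‖T.symm (T (inclusionInDoubleDual ℝ X x))‖ := by
          rw [T.symm_apply_apply, hJnorm]
        have h2 : ‖T.symm (T (inclusionInDoubleDual ℝ X x))‖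
            ≤ cT * ‖T (inclusionInDoubleDual ℝ X x)‖ :=
          (T.symm : (lp (fun _ : ℕ => ℝ) ⊤ × Z) →L[ℝ] StrongDual ℝ (StrongDual ℝ X)).le_opNorm _
        rw [h1]
        exact le_trans h2 (mul_le_mul_of_nonneg_left ht hcT0)
      rw [inv_mul_le_iff₀ (by positivity)]
      nlinarith [norm_nonneg x]
    · -- upper bound
      have hfst : ‖(T (inclusionInDoubleDual ℝ X x)).1‖ ≤ ‖T (inclusionInDoubleDual ℝ X x)‖ :=
        norm_fst_le _
      have hsnd : ‖(T (inclusionInDoubleDual ℝ X x)).2‖ ≤ ‖T (inclusionInDoubleDual ℝ X x)‖ :=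
        norm_snd_le _
      have hS2 : (⨆ n, |yCoord T n x - limUnder (U : Filter ℕ) (fun n => yCoord T n x)|)
          ≤ 2 * ‖T (inclusionInDoubleDual ℝ X x)‖ := by
        refine ciSup_le fun n => ?_
        have h0 := abs_sub (yCoord T n x) (limUnder (U : Filter ℕ) fun n => yCoord T n x)
        have h1 := yCoord_abs_le T x n
        have h2 := (hlimex x).2
        linarith
      have hN : newNorm T U x ≤ 2 * ‖T (inclusionInDoubleDual ℝ X x)‖ := by
        rw [newNorm_eq]
        refine max_le ?_ (max_le hS2 ?_)
        · have h2 := (hlimex x).2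
          have h3 := norm_nonneg (T (inclusionInDoubleDual ℝ X x))
          linarith
        · have h3 := norm_nonneg (T (inclusionInDoubleDual ℝ X x))
          have h4 : ‖zPart T x‖ = ‖(T (inclusionInDoubleDual ℝ X x)).2‖ := rfl
          rw [h4]
          linarith
      have ht : ‖T (inclusionInDoubleDual ℝ X x)‖ ≤ CT * ‖x‖ := by
        have h4 := (T : StrongDual ℝ (StrongDual ℝ X) →L[ℝ] (lp (fun _ : ℕ => ℝ) ⊤ × Z)).le_opNorm
          (inclusionInDoubleDual ℝ X x)
        rw [hJnorm] at h4
        exact h4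
      nlinarith [norm_nonneg x]
  · -- the basis is isometrically `c₀`
    intro B hB c
    have hz : zPart T (∑ i ∈ B, c i • e i) = 0 := by
      rw [map_sum]
      refine Finset.sum_eq_zero fun i _ => ?_
      rw [map_smul, show zPart T (e i) = (T (inclusionInDoubleDual ℝ X (e i))).2 from rfl,
        (heT i).1, smul_zero]
    have hy : ∀ m, yCoord T m (∑ i ∈ B, c i • e i) = if m ∈ B then c m else 0 := by
      intro m
      rw [map_sum]
      have h1 : ∀ i ∈ B, yCoord T m (c i • e i) = if m = i then c i else 0 := by
        intro i _
        rw [map_smul, smul_eq_mul,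
          show yCoord T m (e i) = ((T (inclusionInDoubleDual ℝ X (e i))).1 : ℕ → ℝ) m from rfl,
          (heT i).2 m]
        split <;> simp
      rw [Finset.sum_congr rfl h1, Finset.sum_ite_eq B m c]
    have hBc : ((B : Set ℕ))ᶜ ∈ (U : Filter ℕ) := by
      have h1 : ((B : Set ℕ))ᶜ = ⋂ i ∈ B, ({i}ᶜ : Set ℕ) := by ext m; simp
      rw [h1]
      exact (Filter.biInter_finset_mem B).mpr fun i _ => hU i
    have hev : (fun n => yCoord T n (∑ i ∈ B, c i • e i)) =ᶠ[(U : Filter ℕ)]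
        fun _ => (0 : ℝ) := by
      filter_upwards [hBc] with m hm
      rw [hy m, if_neg (by simpa using hm)]
    have hl : limUnder (U : Filter ℕ) (fun n => yCoord T n (∑ i ∈ B, c i • e i)) = 0 :=
      (Filter.Tendsto.congr' hev.symm tendsto_const_nhds).limUnder_eq
    have h0 : (0 : ℝ) ≤ B.sup' hB fun i => |c i| :=
      le_trans (abs_nonneg (c hB.choose)) (Finset.le_sup' (fun i => |c i|) hB.choose_spec)
    have hsup : (⨆ n, |yCoord T n (∑ i ∈ B, c i • e i) - 0|) = B.sup' hB fun i => |c i| := by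
      apply le_antisymm
      · refine ciSup_le fun n => ?_
        rw [sub_zero, hy n]
        split
        · exact Finset.le_sup' (fun i => |c i|) (by assumption)
        · simpa using h0
      · refine Finset.sup'_le _ _ fun i hi => ?_
        calc |c i| = |yCoord T i (∑ j ∈ B, c j • e j) - 0| := by rw [sub_zero, hy i, if_pos hi]
          _ ≤ _ := le_ciSup (bdd_range T (∑ j ∈ B, c j • e j) 0) i
    rw [newNorm_eq, hl, hsup, hz, norm_zero, abs_zero, max_eq_left h0, max_eq_right h0]
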